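/- arXiv:2406.07991 — 2 statements merged into one kernel-verified Lean document; each statement's English description precedes it below -/
import Mathlib

section
/- (Appendix: asymptotic bias difference between the aggregated-target model and the single-task model.) Let f : Ω → ℝ and ψ : Ω → ℝ be square-integrable mean-zero random variables with Var(f) > 0 and Var(ψ) > 0. Then E[ ( ∑_k w(ψ) k * φ k − f )² ] − E[ ( ∑_k w(f) k * φ k − f )² ] = Var(ψ) * R²(ψ) + Var(f) * R²(f) − 2 * ( cov(f, ψ) − pcov(f, ψ | φ) ). -/
/-!
Expanding the square, the mean squared error of a linear predictor `w ⬝ φ` of `f` is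
`w ⬝ Σ w - 2 w ⬝ c(f) + E[f²]`. At the least-squares coefficients `w = Σ⁻¹ c` the quadratic
term becomes `c ⬝ Σ⁻¹ c`, so the two errors differ by
`c(ψ) ⬝ Σ⁻¹ c(ψ) + c(f) ⬝ Σ⁻¹ c(f) - 2 c(f) ⬝ Σ⁻¹ c(ψ)`, which is the right-hand side once
`R²` and the partial covariance are unfolded.
-/

open MeasureTheory ProbabilityTheory Matrix

/-- Covariance of two real random variables. -/
noncomputable def cov {Ω : Type*} [MeasurableSpace Ω] (μ : Measure Ω) (X Y : Ω → ℝ) : ℝ :=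
  ∫ ω, (X ω - ∫ x, X x ∂μ) * (Y ω - ∫ x, Y x ∂μ) ∂μ

section MeanSquaredError

variable {Ω : Type*} [MeasurableSpace Ω] {μ : Measure Ω}

lemma cov_eq_integral_mul_of_integral_eq_zero {X Y : Ω → ℝ} (hX : ∫ ω, X ω ∂μ = 0)
    (hY : ∫ ω, Y ω ∂μ = 0) : cov μ X Y = ∫ ω, X ω * Y ω ∂μ := by
  simp [cov, hX, hY]

lemma integrable_mul_of_memLp_two {X Y : Ω → ℝ} (hX : MemLp X 2 μ) (hY : MemLp Y 2 μ) :
    Integrable (fun ω => X ω * Y ω) μ :=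
  hX.integrable_mul hY

variable {ι : Type*} [Fintype ι] {φ : ι → Ω → ℝ}

lemma integral_sum_mul_eq_dotProduct (hφ : ∀ k, MemLp (φ k) 2 μ) {g : Ω → ℝ}
    (hg : MemLp g 2 μ) (w : ι → ℝ) :
    ∫ ω, (∑ k, w k * φ k ω) * g ω ∂μ = w ⬝ᵥ fun k => ∫ ω, φ k ω * g ω ∂μ := by
  simp_rw [Finset.sum_mul, mul_assoc]
  rw [integral_finsetSum _ fun k _ => (integrable_mul_of_memLp_two (hφ k) hg).const_mul (w k)]
  simp_rw [integral_const_mul]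
  rfl

lemma integral_sq_sum_mul_sub_eq (hφ : ∀ k, MemLp (φ k) 2 μ) {f : Ω → ℝ} (hf : MemLp f 2 μ)
    (w : ι → ℝ) :
    ∫ ω, (∑ k, w k * φ k ω - f ω) ^ 2 ∂μ
      = w ⬝ᵥ (Matrix.of (fun k j => ∫ ω, φ k ω * φ j ω ∂μ) *ᵥ w)
        - 2 * (w ⬝ᵥ fun k => ∫ ω, φ k ω * f ω ∂μ) + ∫ ω, f ω ^ 2 ∂μ := by
  have hlin : MemLp (fun ω => ∑ k, w k * φ k ω) 2 μ :=
    memLp_finsetSum _ fun k _ => (hφ k).const_mul (w k)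
  have hquad : ∫ ω, (∑ k, w k * φ k ω) * (∑ k, w k * φ k ω) ∂μ
      = w ⬝ᵥ (Matrix.of (fun k j => ∫ ω, φ k ω * φ j ω ∂μ) *ᵥ w) := by
    rw [integral_sum_mul_eq_dotProduct hφ hlin]
    congr 1
    ext k
    simp only [mulVec, of_apply]
    simp_rw [mul_comm (φ k _)]
    rw [dotProduct_comm, integral_sum_mul_eq_dotProduct hφ (hφ k)]
  have hexpand : ∀ ω, (∑ k, w k * φ k ω - f ω) ^ 2
      = (∑ k, w k * φ k ω) * (∑ k, w k * φ k ω) - 2 * ((∑ k, w k * φ k ω) * f ω) + f ω ^ 2 :=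
    fun ω => by ring
  have hsq : Integrable (fun ω => (∑ k, w k * φ k ω) * (∑ k, w k * φ k ω)) μ :=
    integrable_mul_of_memLp_two hlin hlin
  have hmul : Integrable (fun ω => 2 * ((∑ k, w k * φ k ω) * f ω)) μ :=
    (integrable_mul_of_memLp_two hlin hf).const_mul 2
  simp_rw [hexpand]
  rw [integral_add (by exact hsq.sub hmul) hf.integrable_sq, integral_sub hsq hmul,
    integral_const_mul, hquad, integral_sum_mul_eq_dotProduct hφ hf]

end MeanSquaredError

lemma inv_mulVec_dotProduct_mulVec_inv_mulVec {n : Type*} [Fintype n] [DecidableEq n]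
    {S : Matrix n n ℝ} (hS : IsUnit S.det) (c : n → ℝ) :
    (S⁻¹ *ᵥ c) ⬝ᵥ (S *ᵥ (S⁻¹ *ᵥ c)) = c ⬝ᵥ (S⁻¹ *ᵥ c) := by
  rw [mulVec_mulVec, mul_nonsing_inv _ hS, one_mulVec, dotProduct_comm]

theorem bias_difference_aggregated_vs_single_general {Ω : Type*} [MeasurableSpace Ω]
    (μ : Measure Ω) {d : ℕ}
    (φ : Fin d → Ω → ℝ) (hφ : ∀ k, MemLp (φ k) 2 μ)
    (hφ0 : ∀ k, ∫ ω, φ k ω ∂μ = 0)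
    (S : Matrix (Fin d) (Fin d) ℝ)
    (hS : ∀ k j, S k j = cov μ (φ k) (φ j))
    (hSinv : IsUnit S.det)
    (f : Ω → ℝ) (hf : MemLp f 2 μ) (hf0 : ∫ ω, f ω ∂μ = 0)
    (hfvar : 0 < variance f μ)
    (ψ : Ω → ℝ)
    (hψvar : 0 < variance ψ μ)
    (cf : Fin d → ℝ) (hcf : ∀ k, cf k = cov μ (φ k) f)
    (cψ : Fin d → ℝ)
    (wf : Fin d → ℝ) (hwf : wf = S⁻¹ *ᵥ cf)
    (wψ : Fin d → ℝ) (hwψ : wψ = S⁻¹ *ᵥ cψ)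
    (R2f : ℝ) (hR2f : R2f = (cf ⬝ᵥ (S⁻¹ *ᵥ cf)) / variance f μ)
    (R2ψ : ℝ) (hR2ψ : R2ψ = (cψ ⬝ᵥ (S⁻¹ *ᵥ cψ)) / variance ψ μ)
    (pcovfψ : ℝ) (hpcovfψ : pcovfψ = cov μ f ψ - cf ⬝ᵥ (S⁻¹ *ᵥ cψ)) :
    (∫ ω, (∑ k, wψ k * φ k ω - f ω) ^ 2 ∂μ)
      - ∫ ω, (∑ k, wf k * φ k ω - f ω) ^ 2 ∂μ
      = variance ψ μ * R2ψ + variance f μ * R2f - 2 * (cov μ f ψ - pcovfψ) := by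
  have hgram : Matrix.of (fun k j => ∫ ω, φ k ω * φ j ω ∂μ) = S := by
    ext k j
    rw [of_apply, hS, cov_eq_integral_mul_of_integral_eq_zero (hφ0 k) (hφ0 j)]
  have hcross : (fun k => ∫ ω, φ k ω * f ω ∂μ) = cf := by
    ext k
    rw [hcf, cov_eq_integral_mul_of_integral_eq_zero (hφ0 k) hf0]
  rw [integral_sq_sum_mul_sub_eq hφ hf, integral_sq_sum_mul_sub_eq hφ hf, hgram, hcross,
    hwψ, hwf, inv_mulVec_dotProduct_mulVec_inv_mulVec hSinv,
    inv_mulVec_dotProduct_mulVec_inv_mulVec hSinv, hR2ψ, hR2f, hpcovfψ,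
    mul_div_cancel₀ _ hψvar.ne', mul_div_cancel₀ _ hfvar.ne',
    dotProduct_comm _ cf, dotProduct_comm _ cf]
  ring

/-- Appendix: asymptotic bias difference between the aggregated-target model and the
single-task model:
`bias(ψ-model) - bias(f-model) = Var(ψ) R²(ψ) + Var(f) R²(f) - 2 (cov(f,ψ) - pcov(f,ψ|φ))`. -/
theorem bias_difference_aggregated_vs_single {Ω : Type*} [MeasurableSpace Ω]
    (μ : Measure Ω) [IsProbabilityMeasure μ] {d : ℕ} (hd : 0 < d)
    (φ : Fin d → Ω → ℝ) (hφ : ∀ k, MemLp (φ k) 2 μ)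
    (hφ0 : ∀ k, ∫ ω, φ k ω ∂μ = 0)
    (S : Matrix (Fin d) (Fin d) ℝ)
    (hS : ∀ k j, S k j = cov μ (φ k) (φ j))
    (hSinv : IsUnit S.det)
    (f : Ω → ℝ) (hf : MemLp f 2 μ) (hf0 : ∫ ω, f ω ∂μ = 0)
    (hfvar : 0 < variance f μ)
    (ψ : Ω → ℝ) (hψ : MemLp ψ 2 μ) (hψ0 : ∫ ω, ψ ω ∂μ = 0)
    (hψvar : 0 < variance ψ μ)
    (cf : Fin d → ℝ) (hcf : ∀ k, cf k = cov μ (φ k) f)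
    (cψ : Fin d → ℝ) (hcψ : ∀ k, cψ k = cov μ (φ k) ψ)
    (wf : Fin d → ℝ) (hwf : wf = S⁻¹ *ᵥ cf)
    (wψ : Fin d → ℝ) (hwψ : wψ = S⁻¹ *ᵥ cψ)
    (R2f : ℝ) (hR2f : R2f = (cf ⬝ᵥ (S⁻¹ *ᵥ cf)) / variance f μ)
    (R2ψ : ℝ) (hR2ψ : R2ψ = (cψ ⬝ᵥ (S⁻¹ *ᵥ cψ)) / variance ψ μ)
    (pcovfψ : ℝ) (hpcovfψ : pcovfψ = cov μ f ψ - cf ⬝ᵥ (S⁻¹ *ᵥ cψ)) :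
    (∫ ω, (∑ k, wψ k * φ k ω - f ω) ^ 2 ∂μ)
      - ∫ ω, (∑ k, wf k * φ k ω - f ω) ^ 2 ∂μ
      = variance ψ μ * R2ψ + variance f μ * R2f - 2 * (cov μ f ψ - pcovfψ) :=
  bias_difference_aggregated_vs_single_general μ φ hφ hφ0 S hS hSinv f hf hf0 hfvar ψ hψvar cf hcf
    cψ wf hwf wψ hwψ R2f hR2f R2ψ hR2ψ pcovfψ hpcovfψ
end

section
/- (Cancellation of the cross-terms when aggregating two tasks.) Let f_i, f_j : Ω → ℝ be square-integrable mean-zero random variables (the regression functions of the two tasks) and let ε̄ : Ω → ℝ be a square-integrable random variable with cov(φ k, ε̄) = 0 for every k (the averaged noise, uncorrelated with the features). Set ψ := (1/2) * (f_i + f_j) + ε̄, the averaged target. Then the sum over the two tasks of the asymptotic biases of the linear model trained on the averaged target satisfies E[ ( ∑_k w(ψ) k * φ k − f_i )² ] + E[ ( ∑_k w(ψ) k * φ k − f_j )² ] = Var(f_i) + Var(f_j) − 2 * ( c(ψ) ⬝ᵥ (Σ⁻¹ *ᵥ c(ψ)) ). -/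
open MeasureTheory ProbabilityTheory Matrix

/-!
Let `P = ∑ₖ w(ψ)ₖ φₖ`. Since every variable is centred, each bias is a variance, and
`E[(P - f)²] = Var P - 2 cov(P, f) + Var f`. The normal equations `Σ w(ψ) = c(ψ)` say that
`P - ψ` is uncorrelated with the features, hence with `P`, so `Var P = cov(P, ψ)`. As `ε̄` is
uncorrelated with the features, `cov(P, f_i) + cov(P, f_j) = 2 cov(P, ψ)`, and the sum of the
two biases is `Var f_i + Var f_j - 2 cov(P, ψ)` with `cov(P, ψ) = w(ψ) ⬝ c(ψ)`.
-/

theorem cov_eq_covariance {Ω : Type*} [MeasurableSpace Ω] (μ : Measure Ω) (X Y : Ω → ℝ) :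
    cov μ X Y = cov[X, Y; μ] := rfl

namespace ProbabilityTheory

variable {Ω : Type*} [MeasurableSpace Ω] {μ : Measure Ω}

theorem integral_sq_sub_eq_of_integral_eq_zero [IsFiniteMeasure μ] {X Y : Ω → ℝ}
    (hX : MemLp X 2 μ) (hY : MemLp Y 2 μ) (hX0 : ∫ ω, X ω ∂μ = 0) (hY0 : ∫ ω, Y ω ∂μ = 0) :
    ∫ ω, (X ω - Y ω) ^ 2 ∂μ = Var[X; μ] - 2 * cov[X, Y; μ] + Var[Y; μ] := by
  have hXY0 : ∫ ω, (X ω - Y ω) ∂μ = 0 := by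
    rw [integral_sub (hX.integrable one_le_two) (hY.integrable one_le_two), hX0, hY0, sub_zero]
  rw [← variance_sub hX hY,
    variance_of_integral_eq_zero (hX.aemeasurable.sub hY.aemeasurable) hXY0]
  rfl

section LinearCombination

variable {ι : Type*} [Fintype ι] {φ : ι → Ω → ℝ}

theorem memLp_fun_sum_mul {p : ENNReal} (hφ : ∀ k, MemLp (φ k) p μ) (w : ι → ℝ) :
    MemLp (fun ω ↦ ∑ k, w k * φ k ω) p μ :=
  memLp_finsetSum _ fun k _ ↦ (hφ k).const_mul (w k)

theorem integral_fun_sum_mul_eq_zero (hφ : ∀ k, Integrable (φ k) μ)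
    (hφ0 : ∀ k, ∫ ω, φ k ω ∂μ = 0) (w : ι → ℝ) : ∫ ω, ∑ k, w k * φ k ω ∂μ = 0 := by
  simp [integral_finsetSum _ fun k _ ↦ (hφ k).const_mul (w k), integral_const_mul, hφ0]

variable [IsFiniteMeasure μ]

theorem covariance_fun_sum_mul_left (hφ : ∀ k, MemLp (φ k) 2 μ) (w : ι → ℝ) {Y : Ω → ℝ}
    (hY : MemLp Y 2 μ) :
    cov[fun ω ↦ ∑ k, w k * φ k ω, Y; μ] = ∑ k, w k * cov[φ k, Y; μ] := by
  rw [covariance_fun_sum_left (fun k ↦ (hφ k).const_mul (w k)) hY]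
  simp only [covariance_const_mul_left]

theorem covariance_fun_sum_mul_right (hφ : ∀ k, MemLp (φ k) 2 μ) (w : ι → ℝ) {Y : Ω → ℝ}
    (hY : MemLp Y 2 μ) :
    cov[Y, fun ω ↦ ∑ k, w k * φ k ω; μ] = ∑ k, w k * cov[Y, φ k; μ] := by
  simp only [covariance_comm Y, covariance_fun_sum_mul_left hφ w hY]

theorem variance_fun_sum_mul_eq_covariance (hφ : ∀ k, MemLp (φ k) 2 μ) (w : ι → ℝ)
    {ψ : Ω → ℝ} (hψ : MemLp ψ 2 μ)
    (hnormal : ∀ k, cov[φ k, fun ω ↦ ∑ j, w j * φ j ω; μ] = cov[φ k, ψ; μ]) :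
    Var[fun ω ↦ ∑ k, w k * φ k ω; μ] = cov[fun ω ↦ ∑ k, w k * φ k ω, ψ; μ] := by
  have hP := memLp_fun_sum_mul hφ w
  rw [← covariance_self hP.aemeasurable, covariance_fun_sum_mul_left hφ w hP,
    covariance_fun_sum_mul_left hφ w hψ]
  simp only [hnormal]

end LinearCombination

end ProbabilityTheory

theorem cross_terms_cancellation_general {Ω : Type*} [MeasurableSpace Ω] (μ : Measure Ω)
    [IsProbabilityMeasure μ] {d : ℕ}
    (φ : Fin d → Ω → ℝ) (hφ : ∀ k, MemLp (φ k) 2 μ)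
    (hφ0 : ∀ k, ∫ ω, φ k ω ∂μ = 0)
    (S : Matrix (Fin d) (Fin d) ℝ)
    (hS : ∀ k j, S k j = cov μ (φ k) (φ j))
    (hSinv : IsUnit S.det)
    (fi : Ω → ℝ) (hfi : MemLp fi 2 μ) (hfi0 : ∫ ω, fi ω ∂μ = 0)
    (fj : Ω → ℝ) (hfj : MemLp fj 2 μ) (hfj0 : ∫ ω, fj ω ∂μ = 0)
    (εbar : Ω → ℝ) (hεbar : MemLp εbar 2 μ)
    (hεφ : ∀ k, cov μ (φ k) εbar = 0)
    (ψ : Ω → ℝ) (hψ : ∀ ω, ψ ω = (1 / 2) * (fi ω + fj ω) + εbar ω)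
    (cψ : Fin d → ℝ) (hcψ : ∀ k, cψ k = cov μ (φ k) ψ)
    (wψ : Fin d → ℝ) (hwψ : wψ = S⁻¹ *ᵥ cψ) :
    (∫ ω, (∑ k, wψ k * φ k ω - fi ω) ^ 2 ∂μ)
      + ∫ ω, (∑ k, wψ k * φ k ω - fj ω) ^ 2 ∂μ
      = variance fi μ + variance fj μ - 2 * (cψ ⬝ᵥ (S⁻¹ *ᵥ cψ)) := by
  set P : Ω → ℝ := fun ω ↦ ∑ k, wψ k * φ k ω
  have hP : MemLp P 2 μ := memLp_fun_sum_mul hφ wψ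
  have hP0 : ∫ ω, P ω ∂μ = 0 :=
    integral_fun_sum_mul_eq_zero (fun k ↦ (hφ k).integrable one_le_two) hφ0 wψ
  have hψ_eq : ψ = (1 / 2 : ℝ) • (fi + fj) + εbar := funext fun ω ↦ by simp [hψ, mul_add]
  have hψL2 : MemLp ψ 2 μ := hψ_eq ▸ ((hfi.add hfj).const_smul _).add hεbar
  have hSw : S *ᵥ wψ = cψ := by
    rw [hwψ, mulVec_mulVec, mul_nonsing_inv S hSinv, one_mulVec]
  have hnormal : ∀ k, cov[φ k, P; μ] = cov[φ k, ψ; μ] := fun k ↦ by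
    rw [covariance_fun_sum_mul_right hφ wψ (hφ k), ← cov_eq_covariance, ← hcψ, ← hSw]
    simp only [mulVec, dotProduct, hS, cov_eq_covariance, mul_comm]
  have hVarP_eq_cov := variance_fun_sum_mul_eq_covariance hφ wψ hψL2 hnormal
  have hVarP : Var[P; μ] = wψ ⬝ᵥ cψ := by
    rw [hVarP_eq_cov, covariance_fun_sum_mul_left hφ wψ hψL2]
    simp only [dotProduct, hcψ, cov_eq_covariance]
  have hεP : cov[P, εbar; μ] = 0 := by
    simp [P, covariance_fun_sum_mul_left hφ wψ hεbar, ← cov_eq_covariance, hεφ]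
  have hcross : cov[P, fi; μ] + cov[P, fj; μ] = 2 * (wψ ⬝ᵥ cψ) := by
    have hPψ : cov[P, ψ; μ] = 1 / 2 * (cov[P, fi; μ] + cov[P, fj; μ]) + cov[P, εbar; μ] := by
      rw [hψ_eq, covariance_add_right hP ((hfi.add hfj).const_smul _) hεbar,
        covariance_smul_right, covariance_add_right hP hfi hfj]
    rw [← hVarP, hVarP_eq_cov, hPψ, hεP]
    ring
  rw [integral_sq_sub_eq_of_integral_eq_zero hP hfi hP0 hfi0,
    integral_sq_sub_eq_of_integral_eq_zero hP hfj hP0 hfj0, ← hwψ, dotProduct_comm, hVarP]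
  linarith

/-- Cancellation of the cross-terms when aggregating two tasks: with
`ψ = (1/2)(f_i + f_j) + ε̄` and the averaged noise `ε̄` uncorrelated with the features,
the sum over the two tasks of the asymptotic biases of the model trained on `ψ` is
`Var(f_i) + Var(f_j) - 2 (c(ψ) ⬝ᵥ (Σ⁻¹ c(ψ)))`. -/
theorem cross_terms_cancellation {Ω : Type*} [MeasurableSpace Ω] (μ : Measure Ω)
    [IsProbabilityMeasure μ] {d : ℕ} (hd : 0 < d)
    (φ : Fin d → Ω → ℝ) (hφ : ∀ k, MemLp (φ k) 2 μ)
    (hφ0 : ∀ k, ∫ ω, φ k ω ∂μ = 0)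
    (S : Matrix (Fin d) (Fin d) ℝ)
    (hS : ∀ k j, S k j = cov μ (φ k) (φ j))
    (hSinv : IsUnit S.det)
    (fi : Ω → ℝ) (hfi : MemLp fi 2 μ) (hfi0 : ∫ ω, fi ω ∂μ = 0)
    (fj : Ω → ℝ) (hfj : MemLp fj 2 μ) (hfj0 : ∫ ω, fj ω ∂μ = 0)
    (εbar : Ω → ℝ) (hεbar : MemLp εbar 2 μ)
    (hεφ : ∀ k, cov μ (φ k) εbar = 0)
    (ψ : Ω → ℝ) (hψ : ∀ ω, ψ ω = (1 / 2) * (fi ω + fj ω) + εbar ω)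
    (cψ : Fin d → ℝ) (hcψ : ∀ k, cψ k = cov μ (φ k) ψ)
    (wψ : Fin d → ℝ) (hwψ : wψ = S⁻¹ *ᵥ cψ) :
    (∫ ω, (∑ k, wψ k * φ k ω - fi ω) ^ 2 ∂μ)
      + ∫ ω, (∑ k, wψ k * φ k ω - fj ω) ^ 2 ∂μ
      = variance fi μ + variance fj μ - 2 * (cψ ⬝ᵥ (S⁻¹ *ᵥ cψ)) :=
  cross_terms_cancellation_general μ φ hφ hφ0 S hS hSinv fi hfi hfi0 fj hfj hfj0 εbar hεbar hεφ ψ hψ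
    cψ hcψ wψ hwψ
end
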